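/- arXiv:2107.13854 — 4 statements merged into one kernel-verified Lean document; each statement's English description precedes it below -/
import Mathlib

section
/- For any bounded function f: ℝ → ℝ with finite Hölder seminorms of orders θ₁-ε₀ and θ₁+ε₀, where θ₁ ∈ (0,1) and 0 < ε₀ < ½min{θ₁, 1-θ₁}, the fractional Laplacian satisfies the interpolation bound ‖Λ^{θ₁} f‖_{L∞} ≤ C (‖f‖_{Ċ^{θ₁-ε₀}} ‖f‖_{Ċ^{θ₁+ε₀}})^{1/2}. -/
/-!
Write `g z = f s - f (s - z)`. Near the origin the `Ċ^{θ+ε}` bound gives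
`|g z| / |z|^{1+θ} ≤ M₂ |z|^{ε-1}`, and away from it the `Ċ^{θ-ε}` bound gives
`|g z| / |z|^{1+θ} ≤ M₁ |z|^{-1-ε}`; both are integrable on their ranges. Splitting at `|z| = l`
yields `|Λ^θ f (s)| ≤ 2 (M₂ l^ε + M₁ l^{-ε}) / ε`, and the choice `l^ε = √(M₁ / M₂)` balances
the two terms at `√(M₁ M₂)`.
-/

open Real MeasureTheory Set

theorem integrable_comp_abs_of_integrableOn_Ioi {E : Type*} [NormedAddCommGroup E]
    {f : ℝ → E} (hf : IntegrableOn f (Ioi 0)) : Integrable (fun x : ℝ => f |x|) := by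
  have int_Ioi : IntegrableOn (fun x : ℝ => f |x|) (Ioi 0) :=
    hf.congr_fun (fun x hx => by rw [abs_of_pos (by exact hx)]) measurableSet_Ioi
  have int_Iic : IntegrableOn (fun x : ℝ => f |x|) (Iic 0) := by
    have neg : MeasurableEmbedding fun x : ℝ => -x := (Homeomorph.neg ℝ).measurableEmbedding
    rw [← Measure.map_neg_eq_self (volume : Measure ℝ), neg.integrableOn_map_iff]
    simp_rw [Function.comp_def, abs_neg, neg_preimage, neg_Iic, neg_zero]
    exact (integrableOn_Ici_iff_integrableOn_Ioi).mpr int_Ioi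
  simpa only [Iic_union_Ioi, integrableOn_univ] using int_Iic.union int_Ioi

noncomputable def splitMajorant (M₁ M₂ ε l t : ℝ) : ℝ :=
  if t ≤ l then M₂ * t ^ (ε - 1) else M₁ * t ^ (-1 - ε)

section splitMajorant

variable {M₁ M₂ ε l : ℝ}

theorem splitMajorant_of_le {t : ℝ} (ht : t ≤ l) :
    splitMajorant M₁ M₂ ε l t = M₂ * t ^ (ε - 1) :=
  if_pos ht

theorem splitMajorant_of_lt {t : ℝ} (ht : l < t) :
    splitMajorant M₁ M₂ ε l t = M₁ * t ^ (-1 - ε) :=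
  if_neg (not_le.mpr ht)

theorem div_rpow_le_splitMajorant {θ x t : ℝ} (ht : 0 < t)
    (h₁ : |x| ≤ M₁ * t ^ (θ - ε)) (h₂ : |x| ≤ M₂ * t ^ (θ + ε)) :
    |x| / t ^ (1 + θ) ≤ splitMajorant M₁ M₂ ε l t := by
  rw [div_le_iff₀ (rpow_pos_of_pos ht _), splitMajorant]
  split_ifs
  · rwa [mul_assoc, ← rpow_add ht, show ε - 1 + (1 + θ) = θ + ε by ring]
  · rwa [mul_assoc, ← rpow_add ht, show -1 - ε + (1 + θ) = θ - ε by ring]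

theorem integrableOn_splitMajorant_Ioc (hε : 0 < ε) (hl : 0 < l) :
    IntegrableOn (splitMajorant M₁ M₂ ε l) (Ioc 0 l) := by
  have h := intervalIntegral.intervalIntegrable_rpow' (r := ε - 1) (by linarith) (a := 0) (b := l)
  rw [intervalIntegrable_iff_integrableOn_Ioc_of_le hl.le] at h
  have hM₂ : IntegrableOn (fun t => M₂ * t ^ (ε - 1)) (Ioc 0 l) := h.const_mul M₂
  exact hM₂.congr_fun (fun t ht => (splitMajorant_of_le ht.2).symm) measurableSet_Ioc

theorem integrableOn_splitMajorant_Ioi (hε : 0 < ε) (hl : 0 < l) :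
    IntegrableOn (splitMajorant M₁ M₂ ε l) (Ioi l) := by
  have hM₁ : IntegrableOn (fun t => M₁ * t ^ (-1 - ε)) (Ioi l) :=
    (integrableOn_Ioi_rpow_of_lt (by linarith) hl).const_mul M₁
  exact hM₁.congr_fun (fun _ ht => (splitMajorant_of_lt ht).symm) measurableSet_Ioi

theorem integrableOn_splitMajorant (hε : 0 < ε) (hl : 0 < l) :
    IntegrableOn (splitMajorant M₁ M₂ ε l) (Ioi 0) := by
  rw [← Ioc_union_Ioi_eq_Ioi hl.le]
  exact (integrableOn_splitMajorant_Ioc hε hl).union (integrableOn_splitMajorant_Ioi hε hl)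

theorem integral_splitMajorant (hε : 0 < ε) (hl : 0 < l) :
    ∫ t in Ioi 0, splitMajorant M₁ M₂ ε l t = (M₂ * l ^ ε + M₁ * l ^ (-ε)) / ε := by
  have near : ∫ t in Ioc 0 l, splitMajorant M₁ M₂ ε l t = M₂ * l ^ ε / ε := by
    rw [setIntegral_congr_fun measurableSet_Ioc (fun t ht => splitMajorant_of_le ht.2),
      ← intervalIntegral.integral_of_le hl.le, intervalIntegral.integral_const_mul,
      integral_rpow (Or.inl (by linarith)), sub_add_cancel, zero_rpow hε.ne']
    ring
  have far : ∫ t in Ioi l, splitMajorant M₁ M₂ ε l t = M₁ * l ^ (-ε) / ε := by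
    rw [setIntegral_congr_fun measurableSet_Ioi (fun t ht => splitMajorant_of_lt ht),
      integral_const_mul, integral_Ioi_rpow_of_lt (by linarith) hl,
      show -1 - ε + 1 = -ε by ring]
    field_simp
  rw [← Ioc_union_Ioi_eq_Ioi hl.le, setIntegral_union (Ioc_disjoint_Ioi le_rfl) measurableSet_Ioi
    (integrableOn_splitMajorant_Ioc hε hl) (integrableOn_splitMajorant_Ioi hε hl), near, far,
    add_div]

end splitMajorant

section HolderPair

variable {g : ℝ → ℝ} {M₁ M₂ θ ε : ℝ}

theorem abs_integral_div_rpow_le_of_split (hε : 0 < ε) {l : ℝ} (hl : 0 < l)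
    (h₁ : ∀ z, |g z| ≤ M₁ * |z| ^ (θ - ε)) (h₂ : ∀ z, |g z| ≤ M₂ * |z| ^ (θ + ε)) :
    |∫ z, g z / |z| ^ (1 + θ)| ≤ 2 * ((M₂ * l ^ ε + M₁ * l ^ (-ε)) / ε) := by
  have pointwise : ∀ᵐ z ∂volume, |g z / |z| ^ (1 + θ)| ≤ splitMajorant M₁ M₂ ε l |z| := by
    filter_upwards [Measure.ae_ne volume 0] with z hz
    rw [abs_div, abs_of_nonneg (rpow_nonneg (abs_nonneg z) _)]
    exact div_rpow_le_splitMajorant (abs_pos.mpr hz) (h₁ z) (h₂ z)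
  calc |∫ z, g z / |z| ^ (1 + θ)|
      ≤ ∫ z, |g z / |z| ^ (1 + θ)| := abs_integral_le_integral_abs
    _ ≤ ∫ z, splitMajorant M₁ M₂ ε l |z| :=
        integral_mono_of_nonneg (.of_forall fun _ => abs_nonneg _)
          (integrable_comp_abs_of_integrableOn_Ioi (integrableOn_splitMajorant hε hl)) pointwise
    _ = 2 * ((M₂ * l ^ ε + M₁ * l ^ (-ε)) / ε) := by
        rw [integral_comp_abs, integral_splitMajorant hε hl]

theorem exists_rpow_balance (hM₁ : 0 < M₁) (hM₂ : 0 < M₂) (hε : ε ≠ 0) :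
    ∃ l > 0, M₂ * l ^ ε = √(M₁ * M₂) ∧ M₁ * l ^ (-ε) = √(M₁ * M₂) := by
  have hlε : ((√M₁ / √M₂) ^ ε⁻¹) ^ ε = √M₁ / √M₂ := rpow_inv_rpow (by positivity) hε
  refine ⟨(√M₁ / √M₂) ^ ε⁻¹, by positivity, ?_, ?_⟩
  · rw [hlε, sqrt_mul hM₁.le]
    nth_rw 1 [← mul_self_sqrt hM₂.le]
    field_simp
  · rw [rpow_neg (by positivity), hlε, sqrt_mul hM₁.le]
    nth_rw 1 [← mul_self_sqrt hM₁.le]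
    field_simp

theorem abs_integral_div_rpow_le_sqrt_mul (hε : 0 < ε) (hM₁ : 0 ≤ M₁) (hM₂ : 0 ≤ M₂)
    (h₁ : ∀ z, |g z| ≤ M₁ * |z| ^ (θ - ε)) (h₂ : ∀ z, |g z| ≤ M₂ * |z| ^ (θ + ε)) :
    |∫ z, g z / |z| ^ (1 + θ)| ≤ 4 / ε * √(M₁ * M₂) := by
  by_cases hM : M₁ = 0 ∨ M₂ = 0
  · have hg : ∀ z, g z = 0 := fun z => abs_nonpos_iff.mp <| by
      rcases hM with rfl | rfl
      · simpa using h₁ z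
      · simpa using h₂ z
    simp only [hg, zero_div, integral_zero, abs_zero]
    positivity
  obtain ⟨hM₁0, hM₂0⟩ := not_or.mp hM
  obtain ⟨l, hl, near, far⟩ :=
    exists_rpow_balance (hM₁.lt_of_ne' hM₁0) (hM₂.lt_of_ne' hM₂0) hε.ne'
  calc |∫ z, g z / |z| ^ (1 + θ)| ≤ 2 * ((M₂ * l ^ ε + M₁ * l ^ (-ε)) / ε) :=
        abs_integral_div_rpow_le_of_split hε hl h₁ h₂
    _ = 4 / ε * √(M₁ * M₂) := by rw [near, far]; ring

end HolderPair

theorem stmt3_general (θ₁ ε₀ : ℝ) (hε0 : 0 < ε₀) :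
    ∃ C > 0, ∀ f : ℝ → ℝ, (∃ B : ℝ, ∀ x, |f x| ≤ B) →
      ∀ M₁ M₂ : ℝ, 0 ≤ M₁ → 0 ≤ M₂ →
      (∀ s s' : ℝ, |f s - f s'| ≤ M₁ * |s - s'| ^ (θ₁ - ε₀)) →
      (∀ s s' : ℝ, |f s - f s'| ≤ M₂ * |s - s'| ^ (θ₁ + ε₀)) →
      ∀ s : ℝ, |∫ z : ℝ, (f s - f (s - z)) / |z| ^ (1 + θ₁)| ≤ C * Real.sqrt (M₁ * M₂) := by
  refine ⟨4 / ε₀, by positivity, fun f _ M₁ M₂ hM₁ hM₂ h₁ h₂ s => ?_⟩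
  exact abs_integral_div_rpow_le_sqrt_mul hε0 hM₁ hM₂
    (fun z => by simpa only [sub_sub_cancel] using h₁ s (s - z))
    (fun z => by simpa only [sub_sub_cancel] using h₂ s (s - z))

/-- Interpolation bound for the fractional Laplacian
`Λ^{θ₁} f (s) = ∫ (f s - f (s-z))/|z|^{1+θ₁} dz`:
`‖Λ^{θ₁} f‖_{L∞} ≤ C (‖f‖_{Ċ^{θ₁-ε₀}} ‖f‖_{Ċ^{θ₁+ε₀}})^{1/2}`. -/
theorem stmt3 (θ₁ ε₀ : ℝ) (hθ : θ₁ ∈ Set.Ioo (0 : ℝ) 1)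
    (hε0 : 0 < ε₀) (hε1 : ε₀ < min θ₁ (1 - θ₁) / 2) :
    ∃ C > 0, ∀ f : ℝ → ℝ, (∃ B : ℝ, ∀ x, |f x| ≤ B) →
      ∀ M₁ M₂ : ℝ, 0 ≤ M₁ → 0 ≤ M₂ →
      (∀ s s' : ℝ, |f s - f s'| ≤ M₁ * |s - s'| ^ (θ₁ - ε₀)) →
      (∀ s s' : ℝ, |f s - f s'| ≤ M₂ * |s - s'| ^ (θ₁ + ε₀)) →
      ∀ s : ℝ, |∫ z : ℝ, (f s - f (s - z)) / |z| ^ (1 + θ₁)| ≤ C * Real.sqrt (M₁ * M₂) :=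
  stmt3_general θ₁ ε₀ hε0
end

section
/- Let K(t,x) = 8t/(t² + 64π²x²). For every t > 0 and α ∈ ℝ, the L¹ norm in x of the finite difference K(t,x) - K(t,x-α) satisfies ∫_ℝ |K(t,x) - K(t,x-α)| dx ≤ C min{1, |α|/t}. -/
/-! `K t` is a probability density, so the difference `K t x - K t (x - α)` has mass at most `2`.
For small shifts, the identity `K t x - K t y = 8t (q y - q x) / (q x q y)` with
`q x = t² + 64π²x²`, together with AM-GM `16πt|x| ≤ q x`, gives the pointwise bound
`|K t x - K t (x - α)| ≤ (4π|α|/t) (K t x + K t (x - α))`, whose integral is `8π|α|/t`.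
Taking the better of the two bounds pointwise gives the claim with `C = 8π`. -/

open Real MeasureTheory

/-- The Poisson-type kernel of `∂ₜ + Λ/4` on `ℝ`. -/
noncomputable def K (t x : ℝ) : ℝ := 8 * t / (t ^ 2 + 64 * Real.pi ^ 2 * x ^ 2)

section Translation

variable {G : Type*} [MeasurableSpace G] [AddGroup G] [MeasurableAdd G]
  {μ : Measure G} [μ.IsAddRightInvariant]

theorem integral_abs_sub_comp_sub_le {f : G → ℝ} (hf : Integrable f μ) {α : G} {c : ℝ}
    (h : ∀ x, |f x - f (x - α)| ≤ c * (|f x| + |f (x - α)|)) :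
    ∫ x, |f x - f (x - α)| ∂μ ≤ 2 * c * ∫ x, |f x| ∂μ := by
  have hfα : Integrable (fun x => f (x - α)) μ := hf.comp_sub_right α
  calc ∫ x, |f x - f (x - α)| ∂μ ≤ ∫ x, c * (|f x| + |f (x - α)|) ∂μ :=
        integral_mono (hf.sub hfα).abs ((hf.abs.add hfα.abs).const_mul c) h
    _ = 2 * c * ∫ x, |f x| ∂μ := by
        rw [integral_const_mul, integral_add hf.abs hfα.abs,
          integral_sub_right_eq_self (fun x => |f x|) α]
        ring

end Translation

theorem abs_div_sub_div_le {a p r c : ℝ} (ha : 0 ≤ a) (hp : 0 < p) (hr : 0 < r)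
    (h : |r - p| ≤ c * (p + r)) : |a / p - a / r| ≤ c * (a / p + a / r) := by
  have hsub : a / p - a / r = a * (r - p) / (p * r) := by field_simp
  have hadd : a / p + a / r = a * (p + r) / (p * r) := by field_simp; ring
  rw [hsub, hadd, abs_div, abs_mul, abs_of_nonneg ha, abs_of_pos (mul_pos hp hr), ← mul_div_assoc]
  refine div_le_div_of_nonneg_right ?_ (mul_pos hp hr).le
  calc a * |r - p| ≤ a * (c * (p + r)) := by gcongr
    _ = c * (a * (p + r)) := by ring

theorem K_nonneg {t : ℝ} (ht : 0 ≤ t) (x : ℝ) : 0 ≤ K t x := by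
  unfold K; positivity

theorem K_eq_mul_inv_one_add_sq {t : ℝ} (ht : t ≠ 0) (x : ℝ) :
    K t x = 8 / t * (1 + (8 * π / t * x) ^ 2)⁻¹ := by
  unfold K
  field_simp
  ring

theorem integrable_K {t : ℝ} (ht : 0 < t) : Integrable (K t) := by
  rw [funext (K_eq_mul_inv_one_add_sq ht.ne')]
  exact (integrable_inv_one_add_sq.comp_mul_left' (by positivity)).const_mul (8 / t)

theorem integral_K {t : ℝ} (ht : 0 < t) : ∫ x, K t x = 1 := by
  simp only [K_eq_mul_inv_one_add_sq ht.ne']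
  rw [integral_const_mul, Measure.integral_comp_mul_left (fun y => (1 + y ^ 2)⁻¹),
    integral_univ_inv_one_add_sq, smul_eq_mul, abs_of_pos (by positivity)]
  field_simp

theorem sixteen_pi_mul_abs_le (t x : ℝ) :
    16 * π * t * |x| ≤ t ^ 2 + 64 * π ^ 2 * x ^ 2 := by
  have := two_mul_le_add_sq t (8 * π * |x|)
  rw [mul_pow, sq_abs] at this
  linarith

theorem abs_K_sub_K_sub_le {t : ℝ} (ht : 0 < t) (x α : ℝ) :
    |K t x - K t (x - α)| ≤ 4 * π * |α| / t * (K t x + K t (x - α)) := by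
  refine abs_div_sub_div_le (by positivity) (by positivity) (by positivity) ?_
  have hdiff : (t ^ 2 + 64 * π ^ 2 * (x - α) ^ 2) - (t ^ 2 + 64 * π ^ 2 * x ^ 2)
      = -(64 * π ^ 2 * α * (x + (x - α))) := by ring
  have hx := sixteen_pi_mul_abs_le t x
  have hxα := sixteen_pi_mul_abs_le t (x - α)
  rw [hdiff, abs_neg, abs_mul, abs_mul, abs_of_pos (by positivity : (0 : ℝ) < 64 * π ^ 2)]
  calc 64 * π ^ 2 * |α| * |x + (x - α)| ≤ 64 * π ^ 2 * |α| * (|x| + |x - α|) := by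
        gcongr; exact abs_add_le _ _
    _ = 4 * π * |α| / t * (16 * π * t * |x| + 16 * π * t * |x - α|) := by
        field_simp
        ring
    _ ≤ _ := by gcongr

/-- `∫ |K(t,x) - K(t,x-α)| dx ≤ C min{1, |α|/t}`. -/
theorem stmt7 :
    ∃ C > 0, ∀ t : ℝ, 0 < t → ∀ α : ℝ,
      (∫ x : ℝ, |K t x - K t (x - α)|) ≤ C * min 1 (|α| / t) := by
  refine ⟨8 * π, by positivity, fun t ht α => ?_⟩
  have hK : ∀ x, |K t x| = K t x := fun x => abs_of_nonneg (K_nonneg ht.le x)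
  have hpointwise : ∀ x, |K t x - K t (x - α)|
      ≤ min 1 (4 * π * |α| / t) * (|K t x| + |K t (x - α)|) := fun x => by
    rw [min_mul_of_nonneg _ _ (by positivity), one_mul]
    exact le_min (abs_sub _ _) (by simpa only [hK] using abs_K_sub_K_sub_le ht x α)
  have hmin : min 1 (4 * π * |α| / t) ≤ 4 * π * min 1 (|α| / t) := by
    rw [mul_min_of_nonneg _ _ (by positivity), mul_one, mul_div_assoc]
    exact min_le_min_right _ (by linarith [pi_gt_three])
  calc (∫ x, |K t x - K t (x - α)|)
      ≤ 2 * min 1 (4 * π * |α| / t) * ∫ x, |K t x| :=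
        integral_abs_sub_comp_sub_le (integrable_K ht) hpointwise
    _ = 2 * min 1 (4 * π * |α| / t) := by simp only [hK, integral_K ht, mul_one]
    _ ≤ 8 * π * min 1 (|α| / t) := by linarith
end

section
/- Let H(x) = x_{i₁}x_{i₂}x_{i₃}/|x|⁴ on ℝ²∖{0} and define D_H(A₁,A₂) = H(A₁) - H(A₂) - (A₁-A₂)·∇H(A₂). Then |D_H(A₁,A₂)| ≤ C(1/|A₁|³ + 1/|A₂|³)|A₁-A₂|² for all nonzero A₁, A₂ ∈ ℝ². -/
/-!
`H` is positively homogeneous of degree `-1`, so `∇H` and `∇²H` are homogeneous of degrees `-2`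
and `-3`; continuity on the unit circle then gives `|H(x)| ≲ |x|⁻¹`, `‖∇H(x)‖ ≲ |x|⁻²` and
`‖∇²H(x)‖ ≲ |x|⁻³`. If `|A₁ - A₂| ≤ |A₂|/2`, the segment `[A₂, A₁]` stays at distance `≥ |A₂|/2`
from the origin, and the second-order Taylor estimate there gives the bound. Otherwise
`|A₁|, |A₂| ≲ |A₁ - A₂|`, and each of the three terms of `D_H` is bounded separately.
-/

open Real

/-- `H(x) = x_{i₁} x_{i₂} x_{i₃} / |x|⁴` on `ℝ² \ {0}`. -/
noncomputable def Hfun (i₁ i₂ i₃ : Fin 2) (x : EuclideanSpace ℝ (Fin 2)) : ℝ :=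
  x i₁ * x i₂ * x i₃ / ‖x‖ ^ 4

open Filter Metric Set

section

variable {E F : Type*} [NormedAddCommGroup E] [NormedSpace ℝ E]
  [NormedAddCommGroup F] [NormedSpace ℝ F]

-- `D_f(y, x)` in the paper's notation: the base point comes second.
noncomputable def firstOrderRemainder (f : E → F) (y x : E) : F :=
  f y - f x - fderiv ℝ f x (y - x)

theorem norm_firstOrderRemainder_le_of_norm_fderiv_fderiv_le {f : E → F} {x y : E} {K : ℝ}
    (hf : ∀ z ∈ segment ℝ x y, DifferentiableAt ℝ f z)
    (hf' : ∀ z ∈ segment ℝ x y, DifferentiableAt ℝ (fderiv ℝ f) z)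
    (hK : ∀ z ∈ segment ℝ x y, ‖fderiv ℝ (fderiv ℝ f) z‖ ≤ K) :
    ‖firstOrderRemainder f y x‖ ≤ K * ‖y - x‖ ^ 2 := by
  have hK0 : 0 ≤ K :=
    (norm_nonneg (fderiv ℝ (fderiv ℝ f) x)).trans (hK x (left_mem_segment ℝ x y))
  have hlip : ∀ z ∈ segment ℝ x y, ‖fderiv ℝ f z - fderiv ℝ f x‖ ≤ K * ‖y - x‖ := fun z hz =>
    ((convex_segment x y).norm_image_sub_le_of_norm_hasFDerivWithin_le
      (fun w hw => (hf' w hw).hasFDerivAt.hasFDerivWithinAt) hK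
      (left_mem_segment ℝ x y) hz).trans (by gcongr; exact norm_sub_le_of_mem_segment hz)
  calc ‖firstOrderRemainder f y x‖ ≤ K * ‖y - x‖ * ‖y - x‖ :=
        (convex_segment x y).norm_image_sub_le_of_norm_hasFDerivWithin_le'
          (fun w hw => (hf w hw).hasFDerivAt.hasFDerivWithinAt) hlip
          (left_mem_segment ℝ x y) (right_mem_segment ℝ x y)
    _ = K * ‖y - x‖ ^ 2 := by ring

theorem norm_firstOrderRemainder_le_of_norm_sub_le_half {f : E → F} {M : ℝ} {x y : E}
    (hf : ContDiffOn ℝ 2 f {0}ᶜ) (hM : 0 ≤ M)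
    (hf'' : ∀ z ≠ 0, ‖fderiv ℝ (fderiv ℝ f) z‖ ≤ M / ‖z‖ ^ 3)
    (hx : x ≠ 0) (hxy : ‖y - x‖ ≤ ‖x‖ / 2) :
    ‖firstOrderRemainder f y x‖ ≤ 8 * M * (1 / ‖y‖ ^ 3 + 1 / ‖x‖ ^ 3) * ‖y - x‖ ^ 2 := by
  have hx' : 0 < ‖x‖ := norm_pos_iff.2 hx
  have hseg : ∀ z ∈ segment ℝ x y, ‖x‖ / 2 ≤ ‖z‖ := fun z hz => by
    have := norm_sub_le_of_mem_segment hz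
    have := norm_sub_norm_le x z
    rw [norm_sub_rev] at this
    linarith
  have hseg0 : ∀ z ∈ segment ℝ x y, z ∈ ({0}ᶜ : Set E) := fun z hz =>
    norm_pos_iff.1 ((half_pos hx').trans_le (hseg z hz))
  have hf' : ContDiffOn ℝ 1 (fderiv ℝ f) {0}ᶜ := hf.fderiv_of_isOpen isOpen_compl_singleton le_rfl
  calc ‖firstOrderRemainder f y x‖ ≤ 8 * M / ‖x‖ ^ 3 * ‖y - x‖ ^ 2 := by
        refine norm_firstOrderRemainder_le_of_norm_fderiv_fderiv_le
          (fun z hz => (hf.differentiableOn two_ne_zero).differentiableAt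
            (isOpen_compl_singleton.mem_nhds (hseg0 z hz)))
          (fun z hz => (hf'.differentiableOn one_ne_zero).differentiableAt
            (isOpen_compl_singleton.mem_nhds (hseg0 z hz)))
          fun z hz => (hf'' z (hseg0 z hz)).trans ?_
        calc M / ‖z‖ ^ 3 ≤ M / (‖x‖ / 2) ^ 3 := by gcongr; exact hseg z hz
          _ = 8 * M / ‖x‖ ^ 3 := by ring
    _ ≤ 8 * M * (1 / ‖y‖ ^ 3 + 1 / ‖x‖ ^ 3) * ‖y - x‖ ^ 2 := by
        gcongr
        rw [mul_add, mul_one_div, mul_one_div]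
        exact le_add_of_nonneg_left (by positivity)

theorem norm_firstOrderRemainder_le_of_norm_le_two_mul {f : E → F} {M₀ M₁ : ℝ} {x y : E}
    (hM₀ : 0 ≤ M₀) (hM₁ : 0 ≤ M₁) (hf : ∀ z ≠ 0, ‖f z‖ ≤ M₀ / ‖z‖)
    (hf' : ∀ z ≠ 0, ‖fderiv ℝ f z‖ ≤ M₁ / ‖z‖ ^ 2)
    (hx : x ≠ 0) (hy : y ≠ 0) (hxy : ‖x‖ ≤ 2 * ‖y - x‖) :
    ‖firstOrderRemainder f y x‖
      ≤ (13 * M₀ + 2 * M₁) * (1 / ‖y‖ ^ 3 + 1 / ‖x‖ ^ 3) * ‖y - x‖ ^ 2 := by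
  have hy3 : ‖y‖ ≤ 3 * ‖y - x‖ := by
    have := norm_le_norm_add_norm_sub' y x
    linarith
  have hfy : ‖f y‖ ≤ 9 * M₀ / ‖y‖ ^ 3 * ‖y - x‖ ^ 2 :=
    calc ‖f y‖ ≤ M₀ / ‖y‖ := hf y hy
      _ = M₀ * ‖y‖ ^ 2 / ‖y‖ ^ 3 := by field_simp
      _ ≤ M₀ * (3 * ‖y - x‖) ^ 2 / ‖y‖ ^ 3 := by gcongr
      _ = 9 * M₀ / ‖y‖ ^ 3 * ‖y - x‖ ^ 2 := by ring
  have hfx : ‖f x‖ ≤ 4 * M₀ / ‖x‖ ^ 3 * ‖y - x‖ ^ 2 :=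
    calc ‖f x‖ ≤ M₀ / ‖x‖ := hf x hx
      _ = M₀ * ‖x‖ ^ 2 / ‖x‖ ^ 3 := by field_simp
      _ ≤ M₀ * (2 * ‖y - x‖) ^ 2 / ‖x‖ ^ 3 := by gcongr
      _ = 4 * M₀ / ‖x‖ ^ 3 * ‖y - x‖ ^ 2 := by ring
  have hf'x : ‖fderiv ℝ f x (y - x)‖ ≤ 2 * M₁ / ‖x‖ ^ 3 * ‖y - x‖ ^ 2 :=
    calc ‖fderiv ℝ f x (y - x)‖ ≤ ‖fderiv ℝ f x‖ * ‖y - x‖ := (fderiv ℝ f x).le_opNorm _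
      _ ≤ M₁ / ‖x‖ ^ 2 * ‖y - x‖ := by gcongr; exact hf' x hx
      _ = M₁ * ‖x‖ / ‖x‖ ^ 3 * ‖y - x‖ := by field_simp
      _ ≤ M₁ * (2 * ‖y - x‖) / ‖x‖ ^ 3 * ‖y - x‖ := by gcongr
      _ = 2 * M₁ / ‖x‖ ^ 3 * ‖y - x‖ ^ 2 := by ring
  have hsum : 9 * M₀ / ‖y‖ ^ 3 + (4 * M₀ + 2 * M₁) / ‖x‖ ^ 3
      ≤ (13 * M₀ + 2 * M₁) * (1 / ‖y‖ ^ 3 + 1 / ‖x‖ ^ 3) := by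
    rw [mul_add, mul_one_div, mul_one_div]
    gcongr <;> linarith
  calc ‖firstOrderRemainder f y x‖
      ≤ ‖f y‖ + ‖f x‖ + ‖fderiv ℝ f x (y - x)‖ :=
        (norm_sub_le _ _).trans (add_le_add_left (norm_sub_le _ _) _)
    _ ≤ (9 * M₀ / ‖y‖ ^ 3 + (4 * M₀ + 2 * M₁) / ‖x‖ ^ 3) * ‖y - x‖ ^ 2 := by
        rw [add_div]; linarith
    _ ≤ (13 * M₀ + 2 * M₁) * (1 / ‖y‖ ^ 3 + 1 / ‖x‖ ^ 3) * ‖y - x‖ ^ 2 := by gcongr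

def IsPosHomogeneous (g : E → F) (k : ℤ) : Prop :=
  ∀ c : ℝ, 0 < c → ∀ x, g (c • x) = c ^ k • g x

namespace IsPosHomogeneous

variable {g : E → F} {k : ℤ}

-- No differentiability is needed: both sides are `0` where `g` is not differentiable.
theorem fderiv (hg : IsPosHomogeneous g k) : IsPosHomogeneous (fderiv ℝ g) (k - 1) := by
  intro c hc x
  have h := fderiv_comp_smul (f := g) (x := x) c
  rw [show (g <| c • ·) = c ^ k • g from funext fun y => hg c hc y,
    fderiv_const_smul_field] at h
  rw [zpow_sub_one₀ hc.ne', mul_comm, mul_smul, ← Pi.smul_apply (c ^ k), h,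
    inv_smul_smul₀ hc.ne']

theorem exists_norm_le [ProperSpace E] (hg : IsPosHomogeneous g k)
    (hcont : ContinuousOn g (sphere 0 1)) :
    ∃ M, 0 ≤ M ∧ ∀ x ≠ 0, ‖g x‖ ≤ M * ‖x‖ ^ k := by
  obtain ⟨M, hM⟩ := (isCompact_sphere (0 : E) 1).exists_bound_of_continuousOn hcont
  refine ⟨max M 0, le_max_right _ _, fun x hx => ?_⟩
  have hx' : 0 < ‖x‖ := norm_pos_iff.2 hx
  have hu : ‖x‖⁻¹ • x ∈ sphere (0 : E) 1 := by simp [norm_smul, hx'.ne']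
  calc ‖g x‖ = ‖g (‖x‖ • ‖x‖⁻¹ • x)‖ := by rw [smul_inv_smul₀ hx'.ne']
    _ = ‖x‖ ^ k * ‖g (‖x‖⁻¹ • x)‖ := by
        rw [hg _ hx', norm_smul, Real.norm_of_nonneg (by positivity)]
    _ ≤ ‖x‖ ^ k * max M 0 := by gcongr; exact (hM _ hu).trans (le_max_left _ _)
    _ = max M 0 * ‖x‖ ^ k := mul_comm _ _

end IsPosHomogeneous

theorem eventually_norm_firstOrderRemainder_le_of_isPosHomogeneous [ProperSpace E] {f : E → F}
    (hf : IsPosHomogeneous f (-1)) (hf2 : ContDiffOn ℝ 2 f {0}ᶜ) :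
    ∀ᶠ C in atTop, ∀ A₁ A₂ : E, A₁ ≠ 0 → A₂ ≠ 0 →
      ‖firstOrderRemainder f A₁ A₂‖ ≤ C * (1 / ‖A₁‖ ^ 3 + 1 / ‖A₂‖ ^ 3) * ‖A₁ - A₂‖ ^ 2 := by
  have hS : sphere (0 : E) 1 ⊆ {0}ᶜ := fun x hx => ne_zero_of_mem_unit_sphere ⟨x, hx⟩
  have hf' : ContDiffOn ℝ 1 (fderiv ℝ f) {0}ᶜ := hf2.fderiv_of_isOpen isOpen_compl_singleton le_rfl
  obtain ⟨M₀, hM₀, h₀⟩ := hf.exists_norm_le (hf2.continuousOn.mono hS)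
  obtain ⟨M₁, hM₁, h₁⟩ := hf.fderiv.exists_norm_le (hf'.continuousOn.mono hS)
  obtain ⟨M₂, hM₂, h₂⟩ := hf.fderiv.fderiv.exists_norm_le
    ((hf'.continuousOn_fderiv_of_isOpen isOpen_compl_singleton le_rfl).mono hS)
  norm_num [zpow_neg, ← div_eq_mul_inv] at h₀ h₁ h₂
  refine eventually_atTop.2 ⟨13 * M₀ + 2 * M₁ + 8 * M₂, fun C hC A₁ A₂ hA₁ hA₂ => ?_⟩
  rcases le_or_gt ‖A₁ - A₂‖ (‖A₂‖ / 2) with hnear | hfar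
  · refine (norm_firstOrderRemainder_le_of_norm_sub_le_half hf2 hM₂ h₂ hA₂ hnear).trans ?_
    gcongr
    linarith
  · refine (norm_firstOrderRemainder_le_of_norm_le_two_mul hM₀ hM₁ h₀ h₁ hA₂ hA₁
      (by linarith)).trans ?_
    gcongr
    linarith

end

theorem isPosHomogeneous_Hfun (i₁ i₂ i₃ : Fin 2) : IsPosHomogeneous (Hfun i₁ i₂ i₃) (-1) := by
  intro c hc x
  simp only [Hfun, PiLp.smul_apply, smul_eq_mul, norm_smul, Real.norm_of_nonneg hc.le,
    zpow_neg, zpow_one]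
  field_simp

theorem contDiffOn_Hfun (i₁ i₂ i₃ : Fin 2) : ContDiffOn ℝ 2 (Hfun i₁ i₂ i₃) {0}ᶜ := by
  refine ContDiffOn.div (by fun_prop) (fun x hx => ((contDiffAt_norm ℝ hx).pow 4).contDiffWithinAt)
    fun x hx => pow_ne_zero 4 (norm_ne_zero_iff.2 hx)

/-- First-order Taylor remainder bound:
`|H(A₁) - H(A₂) - (A₁-A₂)·∇H(A₂)| ≤ C(1/|A₁|³ + 1/|A₂|³)|A₁-A₂|²`. -/
theorem stmt12 :
    ∃ C > 0, ∀ i₁ i₂ i₃ : Fin 2,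
      ∀ A₁ A₂ : EuclideanSpace ℝ (Fin 2), A₁ ≠ 0 → A₂ ≠ 0 →
        |Hfun i₁ i₂ i₃ A₁ - Hfun i₁ i₂ i₃ A₂
            - fderiv ℝ (Hfun i₁ i₂ i₃) A₂ (A₁ - A₂)|
          ≤ C * (1 / ‖A₁‖ ^ 3 + 1 / ‖A₂‖ ^ 3) * ‖A₁ - A₂‖ ^ 2 := by
  have h : ∀ᶠ C in atTop, ∀ i₁ i₂ i₃ : Fin 2, ∀ A₁ A₂ : EuclideanSpace ℝ (Fin 2),
      A₁ ≠ 0 → A₂ ≠ 0 → ‖firstOrderRemainder (Hfun i₁ i₂ i₃) A₁ A₂‖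
        ≤ C * (1 / ‖A₁‖ ^ 3 + 1 / ‖A₂‖ ^ 3) * ‖A₁ - A₂‖ ^ 2 := by
    simp only [eventually_all]
    exact fun i₁ i₂ i₃ => eventually_norm_firstOrderRemainder_le_of_isPosHomogeneous
      (isPosHomogeneous_Hfun i₁ i₂ i₃) (contDiffOn_Hfun i₁ i₂ i₃)
  obtain ⟨C, hC, hCpos⟩ := (h.and (eventually_gt_atTop 0)).exists
  exact ⟨C, hCpos, by simpa only [firstOrderRemainder, Real.norm_eq_abs] using hC⟩
end

section
/- Let H(x) = x_{i₁}x_{i₂}x_{i₃}/|x|⁴ on ℝ²∖{0}. For any nonzero A₁,A₂,A₃,A₄ ∈ ℝ², |(H(A₁)-H(A₂)) - (H(A₃)-H(A₄))| ≤ C(Σ_{j=1}^4 |A_j|^{-2})|(A₁-A₂)-(A₃-A₄)| + C(Σ_{j=1}^4 |A_j|^{-3})|A₃-A₄|(|A₃-A₁| + |A₄-A₂|). -/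
/-!
`H` is smooth and positively homogeneous of degree `-1` on `ℝ² \ {0}`, so compactness of the unit
circle gives `‖DʲH x‖ ≤ B ‖x‖^(-1-j)` for `j = 0, 1, 2`, and the estimate holds for every function
with these bounds. The mean value theorem on the ball of radius `‖y‖ / 2` around `y` (and the
trivial bound outside it) makes `H` and `DH` Lipschitz with weights `‖x‖⁻² + ‖y‖⁻²` and
`‖x‖⁻³ + ‖y‖⁻³`. If `‖A₂‖ ≥ 2 ‖A₁ - A₂‖` and `‖A₄‖ ≥ 4 ‖A₃ - A₄‖`, the segments `[A₂, A₁]` and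
`[A₄, A₃]` stay away from `0`; the mean value theorem for
`t ↦ H (A₂ + t (A₁ - A₂)) - H (A₄ + t (A₃ - A₄))` then gives the estimate, the two segments being
at distance at most `‖A₃ - A₁‖ + ‖A₄ - A₂‖`. Otherwise `‖A₂‖` or `‖A₄‖` is at most
`4 ‖A₃ - A₄‖` or `4 (‖A₃ - A₁‖ + ‖A₄ - A₂‖)`, and pairing the points suitably in the Lipschitz
bound for `H` suffices, because `∑ ‖A_j‖⁻² ≤ 5 t ∑ ‖A_j‖⁻³` as soon as some `‖A_j‖ ≤ t`.
-/

open Real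

open Filter Set AffineMap

theorem one_div_pow_le_of_half_le {a z : ℝ} (ha : 0 < a) (h : a / 2 ≤ z) (n : ℕ) :
    1 / z ^ n ≤ 2 ^ n / a ^ n := by
  calc 1 / z ^ n ≤ 1 / (a / 2) ^ n :=
        one_div_le_one_div_of_le (by positivity) (pow_le_pow_left₀ (by positivity) h n)
    _ = 2 ^ n / a ^ n := by rw [div_pow, one_div_div]

theorem one_div_sq_le_of_le {a t : ℝ} (ha : 0 < a) (h : a ≤ t) : 1 / a ^ 2 ≤ t * (1 / a ^ 3) := by
  rw [mul_one_div, div_le_div_iff₀ (by positivity) (by positivity)]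
  nlinarith [pow_pos ha 2]

theorem one_div_sq_le_mul_add {a b t : ℝ} (ha : 0 < a) (hb : 0 < b) (hbt : b ≤ t) :
    1 / a ^ 2 ≤ t * (1 / a ^ 3 + 1 / b ^ 3) := by
  have ht : 0 ≤ t := hb.le.trans hbt
  rcases le_total a t with hat | hta
  · nlinarith [one_div_sq_le_of_le ha hat, mul_nonneg ht (by positivity : (0:ℝ) ≤ 1 / b ^ 3)]
  · have hab : 1 / a ^ 2 ≤ 1 / b ^ 2 :=
      one_div_le_one_div_of_le (by positivity) (pow_le_pow_left₀ hb.le (hbt.trans hta) 2)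
    nlinarith [one_div_sq_le_of_le hb hbt, mul_nonneg ht (by positivity : (0:ℝ) ≤ 1 / a ^ 3)]

theorem sum_one_div_sq_le {a₁ a₂ a₃ a₄ t : ℝ} (h₁ : 0 < a₁) (h₂ : 0 < a₂) (h₃ : 0 < a₃)
    (h₄ : 0 < a₄) (ht : a₄ ≤ t) :
    1 / a₁ ^ 2 + 1 / a₂ ^ 2 + 1 / a₃ ^ 2 + 1 / a₄ ^ 2
      ≤ 5 * t * (1 / a₁ ^ 3 + 1 / a₂ ^ 3 + 1 / a₃ ^ 3 + 1 / a₄ ^ 3) := by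
  have ht0 : 0 ≤ t := h₄.le.trans ht
  nlinarith [one_div_sq_le_mul_add h₁ h₄ ht, one_div_sq_le_mul_add h₂ h₄ ht,
    one_div_sq_le_mul_add h₃ h₄ ht, one_div_sq_le_mul_add h₄ h₄ ht,
    mul_nonneg ht0 (by positivity : (0:ℝ) ≤ 1 / a₁ ^ 3),
    mul_nonneg ht0 (by positivity : (0:ℝ) ≤ 1 / a₂ ^ 3),
    mul_nonneg ht0 (by positivity : (0:ℝ) ≤ 1 / a₃ ^ 3)]

theorem div_pow_le_of_le_three_mul {a B δ : ℝ} (k : ℕ) (ha : 0 < a) (hB : 0 ≤ B) (h : a ≤ 3 * δ) :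
    B / a ^ k ≤ 3 * B * (1 / a ^ (k + 1)) * δ := by
  rw [show 3 * B * (1 / a ^ (k + 1)) * δ = B * (3 * δ) / a ^ (k + 1) by ring,
    le_div_iff₀ (by positivity), pow_succ, ← mul_assoc, div_mul_cancel₀ _ (by positivity)]
  exact mul_le_mul_of_nonneg_left h hB

section

variable {E F : Type*} [NormedAddCommGroup E] [NormedAddCommGroup F]

theorem norm_sub_le_of_norm_le_of_half_le {f : E → F} {k : ℕ} {B : ℝ} (hB : 0 ≤ B)
    (hf : ∀ x, x ≠ 0 → ‖f x‖ ≤ B / ‖x‖ ^ k)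
    {x y : E} (hx : x ≠ 0) (hy : y ≠ 0) (hxy : ‖y‖ / 2 ≤ ‖x - y‖) :
    ‖f x - f y‖ ≤ 3 * B * (1 / ‖x‖ ^ (k + 1) + 1 / ‖y‖ ^ (k + 1)) * ‖x - y‖ := by
  have hx3 : ‖x‖ ≤ 3 * ‖x - y‖ := by linarith [norm_le_norm_sub_add x y]
  have hy3 : ‖y‖ ≤ 3 * ‖x - y‖ := by linarith [norm_nonneg y]
  calc ‖f x - f y‖ ≤ B / ‖x‖ ^ k + B / ‖y‖ ^ k :=
        (norm_sub_le _ _).trans (add_le_add (hf x hx) (hf y hy))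
    _ ≤ 3 * B * (1 / ‖x‖ ^ (k + 1)) * ‖x - y‖ + 3 * B * (1 / ‖y‖ ^ (k + 1)) * ‖x - y‖ :=
        add_le_add (div_pow_le_of_le_three_mul k (norm_pos_iff.2 hx) hB hx3)
          (div_pow_le_of_le_three_mul k (norm_pos_iff.2 hy) hB hy3)
    _ = _ := by ring

section WeightedLipschitz

variable {f : E → F} {n : ℕ} {L : ℝ} {A₁ A₂ A₃ A₄ : E}

theorem norm_sub_sub_sub_le_cross (hL : 0 ≤ L)
    (hLip : ∀ x y, x ≠ 0 → y ≠ 0 → ‖f x - f y‖ ≤ L * (1 / ‖x‖ ^ n + 1 / ‖y‖ ^ n) * ‖x - y‖)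
    (h₁ : A₁ ≠ 0) (h₂ : A₂ ≠ 0) (h₃ : A₃ ≠ 0) (h₄ : A₄ ≠ 0) :
    ‖f A₁ - f A₂ - (f A₃ - f A₄)‖
      ≤ L * (1 / ‖A₁‖ ^ n + 1 / ‖A₂‖ ^ n + 1 / ‖A₃‖ ^ n + 1 / ‖A₄‖ ^ n)
        * (‖A₃ - A₁‖ + ‖A₄ - A₂‖) := by
  have h₁₃ := hLip A₃ A₁ h₃ h₁
  have h₄₂ := hLip A₄ A₂ h₄ h₂
  have : 0 ≤ L * (1 / ‖A₂‖ ^ n + 1 / ‖A₄‖ ^ n) * ‖A₃ - A₁‖ := by positivity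
  have : 0 ≤ L * (1 / ‖A₁‖ ^ n + 1 / ‖A₃‖ ^ n) * ‖A₄ - A₂‖ := by positivity
  calc ‖f A₁ - f A₂ - (f A₃ - f A₄)‖ ≤ ‖f A₃ - f A₁‖ + ‖f A₄ - f A₂‖ := by
        rw [show f A₁ - f A₂ - (f A₃ - f A₄) = f A₄ - f A₂ - (f A₃ - f A₁) by abel]
        exact (norm_sub_le _ _).trans_eq (add_comm _ _)
    _ ≤ _ := by nlinarith

theorem norm_sub_sub_sub_le_parallel (hL : 0 ≤ L)
    (hLip : ∀ x y, x ≠ 0 → y ≠ 0 → ‖f x - f y‖ ≤ L * (1 / ‖x‖ ^ n + 1 / ‖y‖ ^ n) * ‖x - y‖)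
    (h₁ : A₁ ≠ 0) (h₂ : A₂ ≠ 0) (h₃ : A₃ ≠ 0) (h₄ : A₄ ≠ 0) :
    ‖f A₁ - f A₂ - (f A₃ - f A₄)‖
      ≤ L * (1 / ‖A₁‖ ^ n + 1 / ‖A₂‖ ^ n + 1 / ‖A₃‖ ^ n + 1 / ‖A₄‖ ^ n)
        * (‖A₁ - A₂ - (A₃ - A₄)‖ + 2 * ‖A₃ - A₄‖) := by
  have h₁₂ := hLip A₁ A₂ h₁ h₂
  have h₃₄ := hLip A₃ A₄ h₃ h₄
  have hr := norm_le_norm_sub_add (A₁ - A₂) (A₃ - A₄)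
  have : 0 ≤ L * (1 / ‖A₃‖ ^ n + 1 / ‖A₄‖ ^ n) * ‖A₁ - A₂‖ := by positivity
  have : 0 ≤ L * (1 / ‖A₁‖ ^ n + 1 / ‖A₂‖ ^ n) * ‖A₃ - A₄‖ := by positivity
  have : 0 ≤ L * (1 / ‖A₁‖ ^ n + 1 / ‖A₂‖ ^ n + 1 / ‖A₃‖ ^ n + 1 / ‖A₄‖ ^ n) := by positivity
  calc ‖f A₁ - f A₂ - (f A₃ - f A₄)‖ ≤ ‖f A₁ - f A₂‖ + ‖f A₃ - f A₄‖ := norm_sub_le _ _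
    _ ≤ _ := by nlinarith

theorem norm_sub_sub_sub_le_of_near_origin {C : ℝ} (hL : 0 ≤ L) (hC : 40 * L ≤ C)
    (hLip : ∀ x y, x ≠ 0 → y ≠ 0 → ‖f x - f y‖ ≤ L * (1 / ‖x‖ ^ 2 + 1 / ‖y‖ ^ 2) * ‖x - y‖)
    (hA₁ : A₁ ≠ 0) (hA₂ : A₂ ≠ 0) (hA₃ : A₃ ≠ 0) (hA₄ : A₄ ≠ 0)
    (hnear : ‖A₂‖ ≤ 4 * ‖A₃ - A₄‖ ∨ ‖A₄‖ ≤ 4 * ‖A₃ - A₄‖ ∨ ‖A₂‖ ≤ 2 * ‖A₁ - A₂‖) :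
    ‖f A₁ - f A₂ - (f A₃ - f A₄)‖
      ≤ C * (1 / ‖A₁‖ ^ 2 + 1 / ‖A₂‖ ^ 2 + 1 / ‖A₃‖ ^ 2 + 1 / ‖A₄‖ ^ 2) * ‖A₁ - A₂ - (A₃ - A₄)‖
        + C * (1 / ‖A₁‖ ^ 3 + 1 / ‖A₂‖ ^ 3 + 1 / ‖A₃‖ ^ 3 + 1 / ‖A₄‖ ^ 3) * ‖A₃ - A₄‖
          * (‖A₃ - A₁‖ + ‖A₄ - A₂‖) := by
  have a₁ := norm_pos_iff.2 hA₁
  have a₂ := norm_pos_iff.2 hA₂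
  have a₃ := norm_pos_iff.2 hA₃
  have a₄ := norm_pos_iff.2 hA₄
  have htri : ‖A₁ - A₂‖ ≤ ‖A₃ - A₁‖ + ‖A₃ - A₄‖ + ‖A₄ - A₂‖ := by
    linarith [norm_sub_le_norm_sub_add_norm_sub A₁ A₃ A₂,
      norm_sub_le_norm_sub_add_norm_sub A₃ A₄ A₂, norm_sub_rev A₁ A₃]
  have hC0 : 0 ≤ C := by linarith
  set d := ‖A₁ - A₂ - (A₃ - A₄)‖
  set e := ‖A₃ - A₄‖
  set p := ‖A₃ - A₁‖
  set q := ‖A₄ - A₂‖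
  set S₂ := 1 / ‖A₁‖ ^ 2 + 1 / ‖A₂‖ ^ 2 + 1 / ‖A₃‖ ^ 2 + 1 / ‖A₄‖ ^ 2
  set S₃ := 1 / ‖A₁‖ ^ 3 + 1 / ‖A₂‖ ^ 3 + 1 / ‖A₃‖ ^ 3 + 1 / ‖A₄‖ ^ 3
  have hd : 0 ≤ C * S₂ * d := by positivity
  have hS₃ : ∀ {K}, K * L ≤ C → K * L * (S₃ * e * (p + q)) ≤ C * S₃ * e * (p + q) :=
    fun hK => by rw [← mul_assoc, ← mul_assoc]; gcongr
  by_cases hsmall : ‖A₂‖ ≤ 4 * e ∨ ‖A₄‖ ≤ 4 * e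
  · have hS : S₂ ≤ 5 * (4 * e) * S₃ := by
      rcases hsmall with h | h
      · linarith [sum_one_div_sq_le a₁ a₃ a₄ a₂ h]
      · exact sum_one_div_sq_le a₁ a₂ a₃ a₄ h
    calc _ ≤ L * S₂ * (p + q) := norm_sub_sub_sub_le_cross hL hLip hA₁ hA₂ hA₃ hA₄
      _ ≤ L * (5 * (4 * e) * S₃) * (p + q) := by gcongr
      _ ≤ _ := by linarith [hS₃ (K := 20) (by linarith)]
  have hr : ‖A₂‖ ≤ 4 * (p + q) := by
    push Not at hsmall
    rcases hnear with h | h | h <;> linarith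
  have hS : S₂ ≤ 5 * (4 * (p + q)) * S₃ := by linarith [sum_one_div_sq_le a₁ a₃ a₄ a₂ hr]
  calc _ ≤ L * S₂ * (d + 2 * e) := norm_sub_sub_sub_le_parallel hL hLip hA₁ hA₂ hA₃ hA₄
    _ = L * S₂ * d + 2 * L * (S₂ * e) := by ring
    _ ≤ C * S₂ * d + 2 * L * (5 * (4 * (p + q)) * S₃ * e) := by gcongr; linarith
    _ ≤ _ := by linarith [hS₃ (K := 40) hC]

end WeightedLipschitz

variable [NormedSpace ℝ E] [NormedSpace ℝ F]

theorem half_norm_le_norm_lineMap {a b : E} {t : ℝ} (ht : t ∈ Icc (0 : ℝ) 1)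
    (h : 2 * ‖b - a‖ ≤ ‖a‖) : ‖a‖ / 2 ≤ ‖lineMap a b t‖ := by
  have hdist : ‖lineMap a b t - a‖ ≤ ‖b - a‖ := by
    rw [← dist_eq_norm, dist_lineMap_left, dist_eq_norm, norm_sub_rev, Real.norm_of_nonneg ht.1]
    exact mul_le_of_le_one_left (norm_nonneg _) ht.2
  linarith [norm_sub_norm_le a (lineMap a b t), norm_sub_rev a (lineMap a b t)]

theorem norm_lineMap_sub_lineMap_le {a b c d : E} {t : ℝ} (ht : t ∈ Icc (0 : ℝ) 1) :
    ‖lineMap a b t - lineMap c d t‖ ≤ ‖a - c‖ + ‖b - d‖ := by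
  have h1t : 0 ≤ 1 - t := sub_nonneg.2 ht.2
  rw [lineMap_apply_module, lineMap_apply_module,
    show (1 - t) • a + t • b - ((1 - t) • c + t • d) = (1 - t) • (a - c) + t • (b - d) by
      simp only [smul_sub]; abel]
  calc ‖(1 - t) • (a - c) + t • (b - d)‖ ≤ (1 - t) * ‖a - c‖ + t * ‖b - d‖ := by
        refine (norm_add_le _ _).trans_eq ?_
        rw [norm_smul, norm_smul, Real.norm_of_nonneg h1t, Real.norm_of_nonneg ht.1]
    _ ≤ ‖a - c‖ + ‖b - d‖ := by
        nlinarith [norm_nonneg (a - c), norm_nonneg (b - d), ht.1, ht.2]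

theorem norm_sub_le_of_norm_fderiv_le_of_lt_half {f : E → F} {n : ℕ} {B : ℝ} (hB : 0 ≤ B)
    (hf : ∀ x, x ≠ 0 → DifferentiableAt ℝ f x)
    (hf' : ∀ x, x ≠ 0 → ‖fderiv ℝ f x‖ ≤ B / ‖x‖ ^ n)
    {x y : E} (hy : y ≠ 0) (hxy : ‖x - y‖ < ‖y‖ / 2) :
    ‖f x - f y‖ ≤ 2 ^ n * B / ‖y‖ ^ n * ‖x - y‖ := by
  have hy0 : 0 < ‖y‖ := norm_pos_iff.2 hy
  have hball : ∀ z ∈ Metric.ball y (‖y‖ / 2), ‖y‖ / 2 ≤ ‖z‖ := fun z hz => by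
    rw [Metric.mem_ball, dist_eq_norm] at hz
    linarith [norm_sub_norm_le y z, norm_sub_rev z y]
  have hne : ∀ z ∈ Metric.ball y (‖y‖ / 2), z ≠ 0 := fun z hz h0 => by
    have := hball z hz
    rw [h0, norm_zero] at this
    linarith
  refine (convex_ball y _).norm_image_sub_le_of_norm_fderiv_le (fun z hz => hf z (hne z hz))
    (fun z hz => ?_) (Metric.mem_ball_self (by positivity)) (by rwa [Metric.mem_ball, dist_eq_norm])
  calc ‖fderiv ℝ f z‖ ≤ B * (1 / ‖z‖ ^ n) := by rw [mul_one_div]; exact hf' z (hne z hz)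
    _ ≤ B * (2 ^ n / ‖y‖ ^ n) :=
        mul_le_mul_of_nonneg_left (one_div_pow_le_of_half_le hy0 (hball z hz) n) hB
    _ = 2 ^ n * B / ‖y‖ ^ n := by ring

theorem norm_sub_le_of_norm_fderiv_le {f : E → F} {k : ℕ} {B : ℝ} (hB : 0 ≤ B)
    (hf : ∀ x, x ≠ 0 → DifferentiableAt ℝ f x)
    (h₀ : ∀ x, x ≠ 0 → ‖f x‖ ≤ B / ‖x‖ ^ k)
    (h₁ : ∀ x, x ≠ 0 → ‖fderiv ℝ f x‖ ≤ B / ‖x‖ ^ (k + 1))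
    {x y : E} (hx : x ≠ 0) (hy : y ≠ 0) :
    ‖f x - f y‖ ≤ (3 + 2 ^ (k + 1)) * B * (1 / ‖x‖ ^ (k + 1) + 1 / ‖y‖ ^ (k + 1)) * ‖x - y‖ := by
  have hS : 0 ≤ B * (1 / ‖x‖ ^ (k + 1) + 1 / ‖y‖ ^ (k + 1)) * ‖x - y‖ := by positivity
  rcases lt_or_ge ‖x - y‖ (‖y‖ / 2) with hnear | hfar
  · calc ‖f x - f y‖ ≤ 2 ^ (k + 1) * B / ‖y‖ ^ (k + 1) * ‖x - y‖ :=
          norm_sub_le_of_norm_fderiv_le_of_lt_half hB hf h₁ hy hnear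
      _ = 2 ^ (k + 1) * (B * (1 / ‖y‖ ^ (k + 1)) * ‖x - y‖) := by ring
      _ ≤ 2 ^ (k + 1) * (B * (1 / ‖x‖ ^ (k + 1) + 1 / ‖y‖ ^ (k + 1)) * ‖x - y‖) := by
          gcongr
          exact le_add_of_nonneg_left (by positivity)
      _ ≤ _ := by nlinarith
  · calc ‖f x - f y‖ ≤ 3 * B * (1 / ‖x‖ ^ (k + 1) + 1 / ‖y‖ ^ (k + 1)) * ‖x - y‖ :=
          norm_sub_le_of_norm_le_of_half_le hB h₀ hx hy hfar
      _ ≤ _ := by nlinarith [pow_pos (two_pos (α := ℝ)) (k + 1)]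

theorem norm_sub_sub_sub_le_of_fderiv_lineMap {f : E → F} {A₁ A₂ A₃ A₄ : E} {M N : ℝ}
    (hf₁ : ∀ t ∈ Icc (0 : ℝ) 1, DifferentiableAt ℝ f (lineMap A₂ A₁ t))
    (hf₂ : ∀ t ∈ Icc (0 : ℝ) 1, DifferentiableAt ℝ f (lineMap A₄ A₃ t))
    (hM : ∀ t ∈ Icc (0 : ℝ) 1, ‖fderiv ℝ f (lineMap A₂ A₁ t)‖ ≤ M)
    (hN : ∀ t ∈ Icc (0 : ℝ) 1,
      ‖fderiv ℝ f (lineMap A₂ A₁ t) - fderiv ℝ f (lineMap A₄ A₃ t)‖ ≤ N) :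
    ‖f A₁ - f A₂ - (f A₃ - f A₄)‖ ≤ M * ‖A₁ - A₂ - (A₃ - A₄)‖ + N * ‖A₃ - A₄‖ := by
  set φ : ℝ → F := fun t => f (lineMap A₂ A₁ t) - f (lineMap A₄ A₃ t)
  have hφ : ∀ t ∈ Icc (0 : ℝ) 1, HasDerivWithinAt φ
      (fderiv ℝ f (lineMap A₂ A₁ t) (A₁ - A₂) - fderiv ℝ f (lineMap A₄ A₃ t) (A₃ - A₄))
      (Icc 0 1) t := fun t ht =>
    (((hf₁ t ht).hasFDerivAt.comp_hasDerivAt t hasDerivAt_lineMap).sub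
      ((hf₂ t ht).hasFDerivAt.comp_hasDerivAt t hasDerivAt_lineMap)).hasDerivWithinAt
  have hφ' : ∀ t ∈ Ico (0 : ℝ) 1, ‖fderiv ℝ f (lineMap A₂ A₁ t) (A₁ - A₂)
      - fderiv ℝ f (lineMap A₄ A₃ t) (A₃ - A₄)‖ ≤ M * ‖A₁ - A₂ - (A₃ - A₄)‖ + N * ‖A₃ - A₄‖ := by
    intro t ht
    have ht' := Ico_subset_Icc_self ht
    rw [show ∀ (S T : E →L[ℝ] F) (v w : E), S v - T w = S (v - w) + (S - T) w by
      intros; simp only [map_sub, FunLike.coe_sub, Pi.sub_apply]; abel]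
    refine (norm_add_le _ _).trans (add_le_add ?_ ?_)
    · exact (ContinuousLinearMap.le_opNorm _ _).trans (by gcongr; exact hM t ht')
    · exact (ContinuousLinearMap.le_opNorm _ _).trans (by gcongr; exact hN t ht')
  simpa [φ, sub_sub_sub_comm] using norm_image_sub_le_of_norm_deriv_le_segment_01' hφ hφ'

theorem norm_sub_sub_sub_le_of_two_mul_norm_sub_le {f : E → F} {B L : ℝ} (hB : 0 ≤ B) (hL : 0 ≤ L)
    (hf : ∀ x, x ≠ 0 → DifferentiableAt ℝ f x)
    (h₁ : ∀ x, x ≠ 0 → ‖fderiv ℝ f x‖ ≤ B / ‖x‖ ^ 2)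
    (hLip : ∀ x y, x ≠ 0 → y ≠ 0 →
      ‖fderiv ℝ f x - fderiv ℝ f y‖ ≤ L * (1 / ‖x‖ ^ 3 + 1 / ‖y‖ ^ 3) * ‖x - y‖)
    {A₁ A₂ A₃ A₄ : E} (h₂ : A₂ ≠ 0) (h₄ : A₄ ≠ 0)
    (h₁₂ : 2 * ‖A₁ - A₂‖ ≤ ‖A₂‖) (h₃₄ : 2 * ‖A₃ - A₄‖ ≤ ‖A₄‖) :
    ‖f A₁ - f A₂ - (f A₃ - f A₄)‖
      ≤ 4 * B / ‖A₂‖ ^ 2 * ‖A₁ - A₂ - (A₃ - A₄)‖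
        + L * (8 / ‖A₂‖ ^ 3 + 8 / ‖A₄‖ ^ 3) * (‖A₃ - A₁‖ + ‖A₄ - A₂‖) * ‖A₃ - A₄‖ := by
  have a₂ : 0 < ‖A₂‖ := norm_pos_iff.2 h₂
  have a₄ : 0 < ‖A₄‖ := norm_pos_iff.2 h₄
  have hγ : ∀ t ∈ Icc (0 : ℝ) 1, ‖A₂‖ / 2 ≤ ‖lineMap A₂ A₁ t‖ := fun t ht =>
    half_norm_le_norm_lineMap ht h₁₂
  have hγ' : ∀ t ∈ Icc (0 : ℝ) 1, ‖A₄‖ / 2 ≤ ‖lineMap A₄ A₃ t‖ := fun t ht =>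
    half_norm_le_norm_lineMap ht h₃₄
  have hγ0 : ∀ t ∈ Icc (0 : ℝ) 1, lineMap A₂ A₁ t ≠ 0 := fun t ht =>
    norm_pos_iff.1 ((half_pos a₂).trans_le (hγ t ht))
  have hγ'0 : ∀ t ∈ Icc (0 : ℝ) 1, lineMap A₄ A₃ t ≠ 0 := fun t ht =>
    norm_pos_iff.1 ((half_pos a₄).trans_le (hγ' t ht))
  refine norm_sub_sub_sub_le_of_fderiv_lineMap (fun t ht => hf _ (hγ0 t ht))
    (fun t ht => hf _ (hγ'0 t ht)) (fun t ht => ?_) (fun t ht => ?_)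
  · calc ‖fderiv ℝ f (lineMap A₂ A₁ t)‖ ≤ B * (1 / ‖lineMap A₂ A₁ t‖ ^ 2) := by
          rw [mul_one_div]; exact h₁ _ (hγ0 t ht)
      _ ≤ B * (2 ^ 2 / ‖A₂‖ ^ 2) :=
          mul_le_mul_of_nonneg_left (one_div_pow_le_of_half_le a₂ (hγ t ht) 2) hB
      _ = 4 * B / ‖A₂‖ ^ 2 := by ring
  · have hsum : 1 / ‖lineMap A₂ A₁ t‖ ^ 3 + 1 / ‖lineMap A₄ A₃ t‖ ^ 3
        ≤ 8 / ‖A₂‖ ^ 3 + 8 / ‖A₄‖ ^ 3 := by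
      rw [show (8 : ℝ) = 2 ^ 3 by norm_num]
      exact add_le_add (one_div_pow_le_of_half_le a₂ (hγ t ht) 3)
        (one_div_pow_le_of_half_le a₄ (hγ' t ht) 3)
    have hdist : ‖lineMap A₂ A₁ t - lineMap A₄ A₃ t‖ ≤ ‖A₃ - A₁‖ + ‖A₄ - A₂‖ := by
      rw [add_comm, norm_sub_rev A₃, norm_sub_rev A₄]
      exact norm_lineMap_sub_lineMap_le ht
    exact (hLip _ _ (hγ0 t ht) (hγ'0 t ht)).trans
      (mul_le_mul (mul_le_mul_of_nonneg_left hsum hL) hdist (norm_nonneg _) (by positivity))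

theorem norm_sub_sub_sub_le_of_far_from_origin {f : E → F} {B L C : ℝ} (hB : 0 ≤ B) (hL : 0 ≤ L)
    (hCB : 4 * B ≤ C) (hCL : 8 * L ≤ C) (hf : ∀ x, x ≠ 0 → DifferentiableAt ℝ f x)
    (h₁ : ∀ x, x ≠ 0 → ‖fderiv ℝ f x‖ ≤ B / ‖x‖ ^ 2)
    (hLip : ∀ x y, x ≠ 0 → y ≠ 0 →
      ‖fderiv ℝ f x - fderiv ℝ f y‖ ≤ L * (1 / ‖x‖ ^ 3 + 1 / ‖y‖ ^ 3) * ‖x - y‖)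
    {A₁ A₂ A₃ A₄ : E} (hA₂ : A₂ ≠ 0) (hA₄ : A₄ ≠ 0)
    (h₁₂ : 2 * ‖A₁ - A₂‖ ≤ ‖A₂‖) (h₃₄ : 2 * ‖A₃ - A₄‖ ≤ ‖A₄‖) :
    ‖f A₁ - f A₂ - (f A₃ - f A₄)‖
      ≤ C * (1 / ‖A₁‖ ^ 2 + 1 / ‖A₂‖ ^ 2 + 1 / ‖A₃‖ ^ 2 + 1 / ‖A₄‖ ^ 2) * ‖A₁ - A₂ - (A₃ - A₄)‖
        + C * (1 / ‖A₁‖ ^ 3 + 1 / ‖A₂‖ ^ 3 + 1 / ‖A₃‖ ^ 3 + 1 / ‖A₄‖ ^ 3) * ‖A₃ - A₄‖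
          * (‖A₃ - A₁‖ + ‖A₄ - A₂‖) := by
  have h₂ : 1 / ‖A₂‖ ^ 2 ≤ 1 / ‖A₁‖ ^ 2 + 1 / ‖A₂‖ ^ 2 + 1 / ‖A₃‖ ^ 2 + 1 / ‖A₄‖ ^ 2 := by
    have : 0 ≤ 1 / ‖A₁‖ ^ 2 + 1 / ‖A₃‖ ^ 2 + 1 / ‖A₄‖ ^ 2 := by positivity
    linarith
  have h₃ : 8 / ‖A₂‖ ^ 3 + 8 / ‖A₄‖ ^ 3
      ≤ 8 * (1 / ‖A₁‖ ^ 3 + 1 / ‖A₂‖ ^ 3 + 1 / ‖A₃‖ ^ 3 + 1 / ‖A₄‖ ^ 3) := by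
    have : 0 ≤ 1 / ‖A₁‖ ^ 3 + 1 / ‖A₃‖ ^ 3 := by positivity
    have : 8 / ‖A₂‖ ^ 3 + 8 / ‖A₄‖ ^ 3 = 8 * (1 / ‖A₂‖ ^ 3 + 1 / ‖A₄‖ ^ 3) := by ring
    linarith
  refine (norm_sub_sub_sub_le_of_two_mul_norm_sub_le hB hL hf h₁ hLip hA₂ hA₄ h₁₂ h₃₄).trans ?_
  have hC : 0 ≤ C := by linarith
  refine add_le_add ?_ ?_
  · calc 4 * B / ‖A₂‖ ^ 2 * ‖A₁ - A₂ - (A₃ - A₄)‖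
        = 4 * B * (1 / ‖A₂‖ ^ 2) * ‖A₁ - A₂ - (A₃ - A₄)‖ := by ring
      _ ≤ _ := by gcongr
  · calc L * (8 / ‖A₂‖ ^ 3 + 8 / ‖A₄‖ ^ 3) * (‖A₃ - A₁‖ + ‖A₄ - A₂‖) * ‖A₃ - A₄‖
        ≤ L * (8 * (1 / ‖A₁‖ ^ 3 + 1 / ‖A₂‖ ^ 3 + 1 / ‖A₃‖ ^ 3 + 1 / ‖A₄‖ ^ 3))
          * (‖A₃ - A₁‖ + ‖A₄ - A₂‖) * ‖A₃ - A₄‖ := by gcongr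
      _ = 8 * L * (1 / ‖A₁‖ ^ 3 + 1 / ‖A₂‖ ^ 3 + 1 / ‖A₃‖ ^ 3 + 1 / ‖A₄‖ ^ 3) * ‖A₃ - A₄‖
          * (‖A₃ - A₁‖ + ‖A₄ - A₂‖) := by ring
      _ ≤ _ := by gcongr

theorem norm_sub_sub_sub_le_of_norm_fderiv_le {f : E → F} {B C : ℝ} (hB : 0 ≤ B)
    (hC : 280 * B ≤ C) (hf : ∀ x, x ≠ 0 → ContDiffAt ℝ 2 f x)
    (h₀ : ∀ x, x ≠ 0 → ‖f x‖ ≤ B / ‖x‖ ^ 1)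
    (h₁ : ∀ x, x ≠ 0 → ‖fderiv ℝ f x‖ ≤ B / ‖x‖ ^ 2)
    (h₂ : ∀ x, x ≠ 0 → ‖fderiv ℝ (fderiv ℝ f) x‖ ≤ B / ‖x‖ ^ 3)
    {A₁ A₂ A₃ A₄ : E} (hA₁ : A₁ ≠ 0) (hA₂ : A₂ ≠ 0) (hA₃ : A₃ ≠ 0) (hA₄ : A₄ ≠ 0) :
    ‖f A₁ - f A₂ - (f A₃ - f A₄)‖
      ≤ C * (1 / ‖A₁‖ ^ 2 + 1 / ‖A₂‖ ^ 2 + 1 / ‖A₃‖ ^ 2 + 1 / ‖A₄‖ ^ 2) * ‖A₁ - A₂ - (A₃ - A₄)‖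
        + C * (1 / ‖A₁‖ ^ 3 + 1 / ‖A₂‖ ^ 3 + 1 / ‖A₃‖ ^ 3 + 1 / ‖A₄‖ ^ 3) * ‖A₃ - A₄‖
          * (‖A₃ - A₁‖ + ‖A₄ - A₂‖) := by
  have hdf : ∀ x, x ≠ 0 → DifferentiableAt ℝ f x := fun x hx =>
    (hf x hx).differentiableAt two_ne_zero
  have hddf : ∀ x, x ≠ 0 → DifferentiableAt ℝ (fderiv ℝ f) x := fun x hx =>
    ((hf x hx).fderiv_right (m := 1) le_rfl).differentiableAt one_ne_zero
  have lip₀ : ∀ x y, x ≠ 0 → y ≠ 0 →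
      ‖f x - f y‖ ≤ 7 * B * (1 / ‖x‖ ^ 2 + 1 / ‖y‖ ^ 2) * ‖x - y‖ := fun x y hx hy =>
    (norm_sub_le_of_norm_fderiv_le (k := 1) hB hdf h₀ h₁ hx hy).trans_eq (by norm_num)
  have lip₁ : ∀ x y, x ≠ 0 → y ≠ 0 →
      ‖fderiv ℝ f x - fderiv ℝ f y‖ ≤ 11 * B * (1 / ‖x‖ ^ 3 + 1 / ‖y‖ ^ 3) * ‖x - y‖ :=
    fun x y hx hy =>
    (norm_sub_le_of_norm_fderiv_le (k := 2) hB hddf h₁ h₂ hx hy).trans_eq (by norm_num)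
  by_cases hnear : ‖A₂‖ ≤ 4 * ‖A₃ - A₄‖ ∨ ‖A₄‖ ≤ 4 * ‖A₃ - A₄‖ ∨ ‖A₂‖ ≤ 2 * ‖A₁ - A₂‖
  · exact norm_sub_sub_sub_le_of_near_origin (by positivity) (by linarith) lip₀ hA₁ hA₂ hA₃ hA₄
      hnear
  · push Not at hnear
    exact norm_sub_sub_sub_le_of_far_from_origin hB (by positivity) (by linarith) (by linarith)
      hdf h₁ lip₁ hA₂ hA₄ hnear.2.2.le (by linarith [norm_nonneg (A₃ - A₄)])

def IsHomogeneousOfNegDegree (k : ℕ) (f : E → F) : Prop :=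
  ∀ c : ℝ, 0 < c → ∀ x, x ≠ 0 → f (c • x) = (c ^ k)⁻¹ • f x

theorem IsHomogeneousOfNegDegree.fderiv {f : E → F} {k : ℕ} (hf : IsHomogeneousOfNegDegree k f)
    (hdiff : ∀ x, x ≠ 0 → DifferentiableAt ℝ f x) :
    IsHomogeneousOfNegDegree (k + 1) (_root_.fderiv ℝ f) := by
  intro c hc x hx
  have hcomp : HasFDerivAt (fun y => f (c • y)) (c • _root_.fderiv ℝ f (c • x)) x := by
    simpa [Function.comp_def] using (hdiff _ (smul_ne_zero hc.ne' hx)).hasFDerivAt.comp x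
      ((hasFDerivAt_id x).const_smul c)
  have hhom : HasFDerivAt (fun y => f (c • y)) ((c ^ k)⁻¹ • _root_.fderiv ℝ f x) x :=
    ((hdiff x hx).hasFDerivAt.const_smul _).congr_of_eventuallyEq
      (by filter_upwards [isOpen_ne.mem_nhds hx] with y hy using hf c hc y hy)
  rw [pow_succ', mul_inv, mul_smul, ← hcomp.unique hhom, inv_smul_smul₀ hc.ne']

theorem IsHomogeneousOfNegDegree.eventually_norm_le [ProperSpace E] {f : E → F} {k : ℕ}
    (hf : IsHomogeneousOfNegDegree k f) (hcont : ∀ x, x ≠ 0 → ContinuousAt f x) :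
    ∀ᶠ B in atTop, ∀ x, x ≠ 0 → ‖f x‖ ≤ B / ‖x‖ ^ k := by
  obtain ⟨K, hK⟩ := (isCompact_sphere (0 : E) 1).exists_bound_of_continuousOn fun x hx =>
    (hcont x (ne_zero_of_mem_unit_sphere (⟨x, hx⟩ : Metric.sphere (0 : E) 1))).continuousWithinAt
  filter_upwards [eventually_ge_atTop K] with B hB x hx
  have hx0 : 0 < ‖x‖ := norm_pos_iff.2 hx
  have hu : ‖x‖⁻¹ • x ∈ Metric.sphere (0 : E) 1 := by
    simp [norm_smul, hx0.ne']
  calc ‖f x‖ = ‖f (‖x‖ • ‖x‖⁻¹ • x)‖ := by rw [smul_inv_smul₀ hx0.ne']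
    _ = ‖f (‖x‖⁻¹ • x)‖ / ‖x‖ ^ k := by
        rw [hf _ hx0 _ (by simpa using hx), norm_smul, norm_inv, norm_pow, norm_norm,
          inv_mul_eq_div]
    _ ≤ B / ‖x‖ ^ k := by gcongr; exact (hK _ hu).trans hB

end

local notation "ℝ²" => EuclideanSpace ℝ (Fin 2)

theorem isHomogeneousOfNegDegree_Hfun (i₁ i₂ i₃ : Fin 2) :
    IsHomogeneousOfNegDegree 1 (Hfun i₁ i₂ i₃) := by
  intro c hc x hx
  have : ‖x‖ ≠ 0 := norm_ne_zero_iff.2 hx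
  simp only [Hfun, norm_smul, PiLp.smul_apply, smul_eq_mul, Real.norm_of_nonneg hc.le, pow_one]
  field_simp

theorem contDiffAt_Hfun (i₁ i₂ i₃ : Fin 2) {n : WithTop ℕ∞} {x : ℝ²} (hx : x ≠ 0) :
    ContDiffAt ℝ n (Hfun i₁ i₂ i₃) x := by
  have hnum : ContDiff ℝ n fun x : ℝ² => x i₁ * x i₂ * x i₃ := by fun_prop
  have hden : ContDiff ℝ n fun x : ℝ² => ‖x‖ ^ 4 := by
    simpa [← pow_mul] using (contDiff_norm_sq ℝ (n := n)).pow 2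
  exact hnum.contDiffAt.div hden.contDiffAt (pow_ne_zero 4 (norm_ne_zero_iff.2 hx))

theorem eventually_abs_Hfun_sub_sub_sub_le (i₁ i₂ i₃ : Fin 2) :
    ∀ᶠ C in atTop, ∀ A₁ A₂ A₃ A₄ : ℝ², A₁ ≠ 0 → A₂ ≠ 0 → A₃ ≠ 0 → A₄ ≠ 0 →
      |(Hfun i₁ i₂ i₃ A₁ - Hfun i₁ i₂ i₃ A₂) - (Hfun i₁ i₂ i₃ A₃ - Hfun i₁ i₂ i₃ A₄)|
        ≤ C * (1 / ‖A₁‖ ^ 2 + 1 / ‖A₂‖ ^ 2 + 1 / ‖A₃‖ ^ 2 + 1 / ‖A₄‖ ^ 2)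
            * ‖(A₁ - A₂) - (A₃ - A₄)‖
          + C * (1 / ‖A₁‖ ^ 3 + 1 / ‖A₂‖ ^ 3 + 1 / ‖A₃‖ ^ 3 + 1 / ‖A₄‖ ^ 3)
            * ‖A₃ - A₄‖ * (‖A₃ - A₁‖ + ‖A₄ - A₂‖) := by
  set H := Hfun i₁ i₂ i₃
  have hH : ∀ x : ℝ², x ≠ 0 → ContDiffAt ℝ 2 H x := fun x hx => contDiffAt_Hfun i₁ i₂ i₃ hx
  have hDH : ∀ x : ℝ², x ≠ 0 → ContDiffAt ℝ 1 (fderiv ℝ H) x := fun x hx =>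
    (hH x hx).fderiv_right le_rfl
  have hom₀ := isHomogeneousOfNegDegree_Hfun i₁ i₂ i₃
  have hom₁ := hom₀.fderiv fun x hx => (hH x hx).differentiableAt two_ne_zero
  have hom₂ := hom₁.fderiv fun x hx => (hDH x hx).differentiableAt one_ne_zero
  obtain ⟨B, hB, h₀, h₁, h₂⟩ := ((eventually_ge_atTop 0).and <|
    (hom₀.eventually_norm_le fun x hx => (hH x hx).continuousAt).and <|
    (hom₁.eventually_norm_le fun x hx => (hDH x hx).continuousAt).and <|
    hom₂.eventually_norm_le fun x hx =>
      ((hDH x hx).fderiv_right (m := 0) le_rfl).continuousAt).exists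
  filter_upwards [eventually_ge_atTop (280 * B)] with C hC A₁ A₂ A₃ A₄ hA₁ hA₂ hA₃ hA₄
  rw [← Real.norm_eq_abs]
  exact norm_sub_sub_sub_le_of_norm_fderiv_le hB hC hH h₀ h₁ h₂ hA₁ hA₂ hA₃ hA₄

/-- Four-point difference estimate for `H`. -/
theorem stmt13 :
    ∃ C > 0, ∀ i₁ i₂ i₃ : Fin 2,
      ∀ A₁ A₂ A₃ A₄ : EuclideanSpace ℝ (Fin 2),
        A₁ ≠ 0 → A₂ ≠ 0 → A₃ ≠ 0 → A₄ ≠ 0 →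
        |(Hfun i₁ i₂ i₃ A₁ - Hfun i₁ i₂ i₃ A₂)
            - (Hfun i₁ i₂ i₃ A₃ - Hfun i₁ i₂ i₃ A₄)|
          ≤ C * (1 / ‖A₁‖ ^ 2 + 1 / ‖A₂‖ ^ 2 + 1 / ‖A₃‖ ^ 2 + 1 / ‖A₄‖ ^ 2)
              * ‖(A₁ - A₂) - (A₃ - A₄)‖
            + C * (1 / ‖A₁‖ ^ 3 + 1 / ‖A₂‖ ^ 3 + 1 / ‖A₃‖ ^ 3 + 1 / ‖A₄‖ ^ 3)
              * ‖A₃ - A₄‖ * (‖A₃ - A₁‖ + ‖A₄ - A₂‖) := by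
  have h := eventually_all.2 fun i₁ => eventually_all.2 fun i₂ => eventually_all.2 fun i₃ =>
    eventually_abs_Hfun_sub_sub_sub_le i₁ i₂ i₃
  exact ((eventually_gt_atTop 0).and h).exists
end
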